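/- For every weight matrix W = (w_1, …, w_m) ∈ ℝ^{d×m}, the dropout loss equals a kernel ridge regression objective: L(W) = (1/2)‖Φ̂_W W̄ − Y‖₂² + (λ/2) W̄^⊤ Ψ̂_W W̄, where λ = (1−q)/q. -/

import Mathlib

/-!
Write the dropout network as `Σ_r σ_r g_r` with `g_r = a_r φ(w_r^⊤ x) / √m`. The masks are
independent with `E σ_r = 1` and `E σ_r² = 1/q`, so the expected squared residual is the
squared residual of the undropped network plus the variance `((1 − q)/q) Σ_r g_r²`. Since
`φ(z) = 𝟙{z ≥ 0} z` and `a_r² = 1`, the undropped output is `Φ̂_W W̄` and `Σ_i Σ_r g_r(x_i)²` is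
`W̄^⊤ Ψ̂_W W̄`.
-/

/-- The ReLU activation. -/
noncomputable def relu (z : ℝ) : ℝ := max z 0

/-- The indicator `𝟙{z ≥ 0}` as a real number. -/
noncomputable def ind (z : ℝ) : ℝ := if 0 ≤ z then 1 else 0

/-- The dropout network `F(W, x, σ) = (1/√m) Σ_r a_r σ_r φ(w_r^⊤ x)`, where the mask is
encoded by `σ : Fin m → Bool`, with `σ_r = 1/q` when `σ r = true` and `σ_r = 0` otherwise. -/
noncomputable def dropoutNet (m d : ℕ) (q : ℝ) (a : Fin m → ℝ) (σ : Fin m → Bool)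
    (W : Fin m → Fin d → ℝ) (x : Fin d → ℝ) : ℝ :=
  (1 / Real.sqrt m) * ∑ r, a r * (if σ r then 1 / q else 0) * relu (∑ k, W r k * x k)

/-- The dropout loss `L(W) = (1/2) E_σ[Σ_i (F(W, x_i, σ) − y_i)²]`, the expectation written
as a finite sum over all masks `σ : Fin m → Bool` with their probabilities. -/
noncomputable def dropoutLoss (m d n : ℕ) (q : ℝ) (a : Fin m → ℝ)
    (x : Fin n → Fin d → ℝ) (y : Fin n → ℝ) (W : Fin m → Fin d → ℝ) : ℝ :=
  (1 / 2) * ∑ σ : Fin m → Bool,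
    (∏ r, if σ r then q else 1 - q) *
      ∑ i, (dropoutNet m d q a σ W (x i) - y i) ^ 2

/-- The feature matrix `Φ̂_W ∈ ℝ^{n × md}`, whose `i`-th row is
`(1/√m)[a_1 𝟙{w_1^⊤x_i ≥ 0} x_i^⊤, …, a_m 𝟙{w_m^⊤x_i ≥ 0} x_i^⊤]`;
the index set `Fin m × Fin d` encodes the stacked columns of `W`. -/
noncomputable def PhiHat (m d n : ℕ) (a : Fin m → ℝ) (x : Fin n → Fin d → ℝ)
    (W : Fin m → Fin d → ℝ) : Matrix (Fin n) (Fin m × Fin d) ℝ :=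
  Matrix.of fun i p => (1 / Real.sqrt m) * a p.1 * ind (∑ k, W p.1 k * x i k) * x i p.2

/-- The block-diagonal matrix `Ψ̂_W = (1/m) diag(ψ̂_1, …, ψ̂_m) ∈ ℝ^{md × md}` with
`ψ̂_r = Σ_i x_i x_i^⊤ · 𝟙{w_r^⊤ x_i ≥ 0}`. -/
noncomputable def PsiHat (m d n : ℕ) (x : Fin n → Fin d → ℝ)
    (W : Fin m → Fin d → ℝ) : Matrix (Fin m × Fin d) (Fin m × Fin d) ℝ :=
  Matrix.of fun p p' =>
    if p.1 = p'.1 then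
      (1 / (m : ℝ)) * ∑ i, x i p.2 * x i p'.2 * ind (∑ k, W p.1 k * x i k)
    else 0

/-- `W̄ = vec(W) ∈ ℝ^{md}`: the columns `w_1, …, w_m` stacked. -/
def vecW (m d : ℕ) (W : Fin m → Fin d → ℝ) : Fin m × Fin d → ℝ := fun p => W p.1 p.2

open Finset

section MaskMoments

/- `∏ t, w (σ t)` is the probability of the mask `σ` whose coordinates are i.i.d. with law `w`. -/
variable {ι : Type*} [Fintype ι] [DecidableEq ι] {w : Bool → ℝ}

theorem sum_prod_mul_prod_eq_prod_sum (hw : ∑ b, w b = 1) (s : Finset ι)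
    (f : ι → Bool → ℝ) :
    ∑ σ : ι → Bool, (∏ t, w (σ t)) * ∏ t ∈ s, f t (σ t) = ∏ t ∈ s, ∑ b, w b * f t b := by
  have hσ : ∀ σ : ι → Bool, (∏ t, w (σ t)) * ∏ t ∈ s, f t (σ t)
      = ∏ t, w (σ t) * if t ∈ s then f t (σ t) else 1 := fun σ => by
    rw [prod_mul_distrib, prod_ite_mem, univ_inter]
  have ht : ∀ t, ∑ b, w b * (if t ∈ s then f t b else 1)
      = if t ∈ s then ∑ b, w b * f t b else 1 := fun t => by
    split_ifs
    · rfl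
    · simpa using hw
  simp_rw [hσ, ← Fintype.prod_sum (fun t b => w b * if t ∈ s then f t b else 1), ht,
    prod_ite_mem, univ_inter]

theorem sum_prod_eq_one (hw : ∑ b, w b = 1) :
    ∑ σ : ι → Bool, ∏ t, w (σ t) = 1 := by
  simpa using sum_prod_mul_prod_eq_prod_sum hw ∅ (fun _ _ => (1 : ℝ))

theorem sum_prod_mul_apply (hw : ∑ b, w b = 1) (c : Bool → ℝ) (r : ι) :
    ∑ σ : ι → Bool, (∏ t, w (σ t)) * c (σ r) = ∑ b, w b * c b := by
  simpa using sum_prod_mul_prod_eq_prod_sum hw {r} (fun _ => c)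

theorem sum_prod_mul_apply_mul_apply (hw : ∑ b, w b = 1) (c : Bool → ℝ) (r s : ι) :
    ∑ σ : ι → Bool, (∏ t, w (σ t)) * (c (σ r) * c (σ s))
      = (∑ b, w b * c b) ^ 2
        + if r = s then ∑ b, w b * c b ^ 2 - (∑ b, w b * c b) ^ 2 else 0 := by
  split_ifs with hrs
  · subst hrs
    simp_rw [add_sub_cancel, ← sq]
    exact sum_prod_mul_apply hw (fun b => c b ^ 2) r
  · simpa [prod_pair hrs, sq] using sum_prod_mul_prod_eq_prod_sum hw {r, s} (fun _ => c)

theorem sum_prod_mul_sum_mul (hw : ∑ b, w b = 1) (c : Bool → ℝ) (g : ι → ℝ) :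
    ∑ σ : ι → Bool, (∏ t, w (σ t)) * ∑ r, c (σ r) * g r = (∑ b, w b * c b) * ∑ r, g r := by
  simp_rw [mul_sum, ← mul_assoc]
  rw [sum_comm]
  simp_rw [← sum_mul, sum_prod_mul_apply hw]

theorem sum_prod_mul_sum_mul_sq (hw : ∑ b, w b = 1) (c : Bool → ℝ) (g : ι → ℝ) :
    ∑ σ : ι → Bool, (∏ t, w (σ t)) * (∑ r, c (σ r) * g r) ^ 2
      = (∑ b, w b * c b) ^ 2 * (∑ r, g r) ^ 2
        + (∑ b, w b * c b ^ 2 - (∑ b, w b * c b) ^ 2) * ∑ r, g r ^ 2 := by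
  have hsq : ∀ σ : ι → Bool, (∏ t, w (σ t)) * (∑ r, c (σ r) * g r) ^ 2
      = ∑ r, ∑ s, (∏ t, w (σ t)) * (c (σ r) * c (σ s)) * (g r * g s) := fun σ => by
    simp_rw [sq, sum_mul_sum, mul_sum]
    exact sum_congr rfl fun r _ => sum_congr rfl fun s _ => by ring
  simp_rw [hsq]
  rw [sum_comm]
  simp_rw [sum_comm (γ := ι → Bool), ← sum_mul, sum_prod_mul_apply_mul_apply hw, add_mul,
    sum_add_distrib, ite_mul, zero_mul, sum_ite_eq, mem_univ, if_true, ← mul_sum, ← sq]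
  rw [sq (∑ r, g r), sum_mul]

theorem sum_prod_mul_sum_mul_sub_sq (hw : ∑ b, w b = 1) (c : Bool → ℝ) (g : ι → ℝ) (y : ℝ) :
    ∑ σ : ι → Bool, (∏ t, w (σ t)) * (∑ r, c (σ r) * g r - y) ^ 2
      = ((∑ b, w b * c b) * ∑ r, g r - y) ^ 2
        + (∑ b, w b * c b ^ 2 - (∑ b, w b * c b) ^ 2) * ∑ r, g r ^ 2 := by
  have hσ : ∀ σ : ι → Bool, (∏ t, w (σ t)) * (∑ r, c (σ r) * g r - y) ^ 2
      = (∏ t, w (σ t)) * (∑ r, c (σ r) * g r) ^ 2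
        - 2 * y * ((∏ t, w (σ t)) * ∑ r, c (σ r) * g r) + y ^ 2 * ∏ t, w (σ t) :=
    fun σ => by ring
  simp_rw [hσ, sum_add_distrib, sum_sub_distrib, ← mul_sum, sum_prod_mul_sum_mul_sq hw,
    sum_prod_mul_sum_mul hw, sum_prod_eq_one hw]
  ring

theorem sum_bernoulliMask_mul_sub_sq (q : ℝ) (hq : q ≠ 0) (g : ι → ℝ) (y : ℝ) :
    ∑ σ : ι → Bool, (∏ t, if σ t then q else 1 - q)
        * (∑ r, (if σ r then 1 / q else 0) * g r - y) ^ 2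
      = (∑ r, g r - y) ^ 2 + (1 - q) / q * ∑ r, g r ^ 2 := by
  have hw : ∑ b, (fun b : Bool => if b then q else 1 - q) b = 1 := by simp
  convert sum_prod_mul_sum_mul_sub_sq hw (fun b => if b then 1 / q else 0) g y using 3
  · simp [hq]
  · simp
    field_simp

end MaskMoments

theorem relu_eq_ind_mul (z : ℝ) : relu z = ind z * z := by
  unfold relu ind
  split_ifs with h
  · simp [h]
  · simp [le_of_not_ge h]

theorem relu_sq (z : ℝ) : relu z ^ 2 = ind z * z ^ 2 := by
  rw [relu_eq_ind_mul, mul_pow]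
  unfold ind
  split_ifs <;> simp

section Network

open Matrix

variable {m d n : ℕ}

noncomputable def neuronOutput (a : Fin m → ℝ) (W : Fin m → Fin d → ℝ) (x : Fin d → ℝ)
    (r : Fin m) : ℝ :=
  a r * relu (∑ k, W r k * x k) / Real.sqrt m

theorem neuronOutput_sq {a : Fin m → ℝ} (ha : ∀ r, a r = 1 ∨ a r = -1)
    (W : Fin m → Fin d → ℝ) (x : Fin d → ℝ) (r : Fin m) :
    neuronOutput a W x r ^ 2 = ind (∑ k, W r k * x k) * (∑ k, W r k * x k) ^ 2 / m := by
  have ha_sq : a r ^ 2 = 1 := by rcases ha r with h | h <;> simp [h]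
  rw [neuronOutput, div_pow, mul_pow, ha_sq, one_mul, relu_sq, Real.sq_sqrt m.cast_nonneg]

theorem dropoutNet_eq_sum (q : ℝ) (a : Fin m → ℝ) (σ : Fin m → Bool) (W : Fin m → Fin d → ℝ)
    (x : Fin d → ℝ) :
    dropoutNet m d q a σ W x = ∑ r, (if σ r then 1 / q else 0) * neuronOutput a W x r := by
  rw [dropoutNet, mul_sum]
  exact sum_congr rfl fun r _ => by rw [neuronOutput]; ring

theorem PhiHat_mulVec_vecW (a : Fin m → ℝ) (x : Fin n → Fin d → ℝ) (W : Fin m → Fin d → ℝ)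
    (i : Fin n) :
    (PhiHat m d n a x W *ᵥ vecW m d W) i = ∑ r, neuronOutput a W (x i) r := by
  simp only [mulVec, dotProduct, PhiHat, vecW, of_apply, Fintype.sum_prod_type,
    neuronOutput, relu_eq_ind_mul, mul_sum, sum_div]
  exact sum_congr rfl fun r _ => sum_congr rfl fun k _ => by ring

theorem vecW_dotProduct_PsiHat_mulVec (x : Fin n → Fin d → ℝ) (W : Fin m → Fin d → ℝ) :
    vecW m d W ⬝ᵥ (PsiHat m d n x W *ᵥ vecW m d W)
      = ∑ i, ∑ r, ind (∑ k, W r k * x i k) * (∑ k, W r k * x i k) ^ 2 / m := by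
  simp only [mulVec, dotProduct, PsiHat, vecW, of_apply, Fintype.sum_prod_type,
    ite_mul, zero_mul, sum_ite_irrel, sum_const_zero, sum_ite_eq, mem_univ, if_true]
  rw [sum_comm (γ := Fin n)]
  refine sum_congr rfl fun r _ => ?_
  simp only [sq, mul_sum, sum_mul, sum_div]
  conv_rhs => rw [sum_comm]
  refine sum_congr rfl fun k _ => ?_
  conv_rhs => rw [sum_comm]
  exact sum_congr rfl fun k' _ => sum_congr rfl fun i _ => by ring

end Network

theorem dropout_loss_is_krr_general (m d n : ℕ)
    (q : ℝ) (hq0 : 0 < q)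
    (a : Fin m → ℝ) (ha : ∀ r, a r = 1 ∨ a r = -1)
    (x : Fin n → Fin d → ℝ) (y : Fin n → ℝ) (W : Fin m → Fin d → ℝ) :
    dropoutLoss m d n q a x y W
      = (1 / 2) * ∑ i, ((PhiHat m d n a x W).mulVec (vecW m d W) i - y i) ^ 2
        + ((1 - q) / q / 2) *
          dotProduct (vecW m d W) ((PsiHat m d n x W).mulVec (vecW m d W)) := by
  have hloss : dropoutLoss m d n q a x y W = (1 / 2) * ∑ i,
      ((∑ r, neuronOutput a W (x i) r - y i) ^ 2
        + (1 - q) / q * ∑ r, neuronOutput a W (x i) r ^ 2) := by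
    simp_rw [dropoutLoss, mul_sum, dropoutNet_eq_sum]
    rw [sum_comm]
    simp_rw [← mul_sum, sum_bernoulliMask_mul_sub_sq q hq0.ne']
  rw [hloss, vecW_dotProduct_PsiHat_mulVec]
  simp_rw [PhiHat_mulVec_vecW, neuronOutput_sq ha]
  rw [sum_add_distrib, ← mul_sum]
  ring

/-- For every weight matrix `W`, the dropout loss equals a kernel ridge
regression objective: `L(W) = (1/2)‖Φ̂_W W̄ − Y‖₂² + (λ/2) W̄^⊤ Ψ̂_W W̄` with `λ = (1−q)/q`. -/
theorem dropout_loss_is_krr (m d n : ℕ) (hm : 0 < m)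
    (q : ℝ) (hq0 : 0 < q) (hq1 : q ≤ 1)
    (a : Fin m → ℝ) (ha : ∀ r, a r = 1 ∨ a r = -1)
    (x : Fin n → Fin d → ℝ) (y : Fin n → ℝ) (W : Fin m → Fin d → ℝ) :
    dropoutLoss m d n q a x y W
      = (1 / 2) * ∑ i, ((PhiHat m d n a x W).mulVec (vecW m d W) i - y i) ^ 2
        + ((1 - q) / q / 2) *
          dotProduct (vecW m d W) ((PsiHat m d n x W).mulVec (vecW m d W)) :=
  dropout_loss_is_krr_general m d n q hq0 a ha x y W
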